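/- arXiv:1403.4813 — 2 statements merged into one kernel-verified Lean document; each statement's English description precedes it below -/
import Mathlib

section
/- Let s₀ →α₀ s₁ →α₁ ... →α_{k-1} s_k →α_k s_{k+1} be an execution fragment in an action-deterministic transition system, and suppose β = α_k is enabled in s₀ and β is pairwise independent of each of α₀, ..., α_{k-1}. Then there exists an execution fragment of the same length k+1 from s₀ to s_{k+1} that executes β first, namely s₀ →β β(s₀) →α₀ β(s₁) →α₁ ... →α_{k-1} β(s_k) = s_{k+1}. -/
/-- An action-deterministic transition system: each action has at most one
successor from each state, given by a partial step function. -/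
structure TS (S A : Type) where
  step : A → S → Option S

namespace TS

variable {S A : Type}

/-- An action is enabled in a state if it has a successor. -/
def Enabled (T : TS S A) (a : A) (s : S) : Prop := (T.step a s).isSome

/-- `I` is an independence relation: for every state where two distinct
`I`-related actions are both enabled, each remains enabled after the other
(enabledness) and the two execution orders yield the same state (commutativity). -/
def IndepRel (T : TS S A) (I : A → A → Prop) : Prop :=
  ∀ a b s, I a b → a ≠ b → T.Enabled a s → T.Enabled b s →
    ∃ sa sb, T.step a s = some sa ∧ T.step b s = some sb ∧
      T.Enabled b sa ∧ T.Enabled a sb ∧ T.step b sa = T.step a sb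

/-- A deadlock state: no action is enabled. -/
def Deadlock (T : TS S A) (s : S) : Prop := ∀ a : A, ¬ T.Enabled a s

/-- `Run T l s t`: an execution fragment from `s` to `t` whose sequence of
action labels is `l` (so its length is `l.length`). -/
inductive Run (T : TS S A) : List A → S → S → Prop
  | nil (s : S) : Run T [] s s
  | cons {a : A} {l : List A} {s s' t : S} :
      T.step a s = some s' → Run T l s' t → Run T (a :: l) s t

/-- `ARun T amp l s t`: an execution fragment in the reduced graph that keeps,
from each state `u`, only the transitions labeled by actions in `amp u`. -/
inductive ARun (T : TS S A) (amp : S → Set A) : List A → S → S → Prop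
  | nil (s : S) : ARun T amp [] s s
  | cons {a : A} {l : List A} {s s' t : S} :
      a ∈ amp s → T.step a s = some s' → ARun T amp l s' t → ARun T amp (a :: l) s t

end TS

namespace TS

variable {S A : Type} {T : TS S A}

theorem Run.exists_mid_of_append {l₁ l₂ : List A} {s t : S} (h : T.Run (l₁ ++ l₂) s t) :
    ∃ u, T.Run l₁ s u ∧ T.Run l₂ u t := by
  induction l₁ generalizing s with
  | nil => exact ⟨s, .nil s, h⟩
  | cons a l₁ ih =>
    obtain _ | ⟨hstep, hrest⟩ := h
    obtain ⟨u, hl₁, hl₂⟩ := ih hrest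
    exact ⟨u, .cons hstep hl₁, hl₂⟩

theorem Run.step_of_singleton {a : A} {s t : S} (h : T.Run [a] s t) : T.step a s = some t := by
  obtain _ | ⟨hstep, hrest⟩ := h
  cases hrest
  exact hstep

theorem IndepRel.exists_step_comm {I : A → A → Prop} (hI : T.IndepRel I) {a b : A} {s sa : S}
    (hab : I a b) (hne : a ≠ b) (ha : T.step a s = some sa) (hb : T.Enabled b s) :
    ∃ sb, T.step b s = some sb ∧ T.Enabled b sa ∧ T.step b sa = T.step a sb := by
  obtain ⟨sa', sb, ha', hsb, hba, -, hcomm⟩ := hI a b s hab hne (by simp [Enabled, ha]) hb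
  obtain rfl : sa = sa' := Option.some_injective _ (ha.symm.trans ha')
  exact ⟨sb, hsb, hba, hcomm⟩

/-- Commuting `b` with the first action of the fragment is what makes `b` enabled in the next
state, as the commutation further down the fragment requires. -/
theorem Run.exists_step_of_indep {I : A → A → Prop} (hI : T.IndepRel I) {l : List A} {b : A}
    {s u t : S} (hrun : T.Run l s u) (hb : T.Enabled b s) (hu : T.step b u = some t)
    (hne : ∀ a ∈ l, a ≠ b) (hind : ∀ a ∈ l, I a b) :
    ∃ s', T.step b s = some s' ∧ T.Run l s' t := by
  induction hrun with
  | nil s => exact ⟨t, hu, .nil t⟩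
  | @cons a l s sa u ha _ ih =>
    obtain ⟨sb, hsb, hba, hcomm⟩ :=
      hI.exists_step_comm (hind a (List.mem_cons_self ..)) (hne a (List.mem_cons_self ..)) ha hb
    obtain ⟨sab, hsab, hl⟩ := ih hba hu (fun x hx => hne x (List.mem_cons_of_mem a hx))
      (fun x hx => hind x (List.mem_cons_of_mem a hx))
    exact ⟨sb, hsb, .cons (hcomm ▸ hsab) hl⟩

end TS

/-- if `s₀ →α₀ s₁ → ... →α_{k-1} s_k →β s_{k+1}` is an execution
fragment, `β` is enabled in `s₀`, and `β` is independent of each of the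
(distinct from `β`) actions `α₀, ..., α_{k-1}`, then there is an execution
fragment of the same length from `s₀` to `s_{k+1}` executing `β` first,
namely the one labeled `β :: [α₀, ..., α_{k-1}]`. -/
theorem stmt1 {S A : Type} (T : TS S A) (I : A → A → Prop) (hI : T.IndepRel I)
    (l : List A) (b : A) (s t : S)
    (hrun : T.Run (l ++ [b]) s t)
    (hb : T.Enabled b s)
    (hne : ∀ a ∈ l, a ≠ b)
    (hind : ∀ a ∈ l, I a b) :
    T.Run (b :: l) s t := by
  obtain ⟨u, hl, hlast⟩ := hrun.exists_mid_of_append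
  obtain ⟨s', hs', hl'⟩ := hl.exists_step_of_indep hI hb hlast.step_of_singleton hne hind
  exact .cons hs' hl'
end

section
/- Let π = s₀ →α₀ s₁ → ... →α_{n-1} s_n be an execution fragment in an action-deterministic transition system with s_n a deadlock state. Let A ⊆ enabled(s₀) satisfy condition C1, suppose α_k is the first action of π lying in A, and suppose each of α₀,...,α_{k-1} is independent of α_k. Then there is an execution fragment of the same length n from s₀ to s_n whose first action is α_k. -/
/-!
Repeatedly commuting `α_k` with its predecessor, which is independent of it, distinct from it
(it lies outside `Amp`) and enabled together with it, moves `α_k` to the front without changing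
the length of the fragment or its end state.
-/

namespace TS

variable {S A : Type} {T : TS S A} {I : A → A → Prop}

theorem Enabled.of_step {a : A} {s s' : S} (h : T.step a s = some s') : T.Enabled a s := by
  simp [Enabled, h]

theorem IndepRel.enabled_of_step (hI : T.IndepRel I) {a b : A} {s s' : S}
    (hab : I a b) (hne : a ≠ b) (ha : T.step a s = some s') (hb : T.Enabled b s) :
    T.Enabled b s' := by
  obtain ⟨sa, -, hsa, -, hb', -, -⟩ := hI a b s hab hne (.of_step ha) hb
  rwa [Option.some_inj.mp (ha.symm.trans hsa)]

theorem IndepRel.run_cons_cons (hI : T.IndepRel I) {a b : A} {l : List A} {s s' t : S}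
    (hab : I a b) (hne : a ≠ b) (ha : T.step a s = some s') (hb : T.Enabled b s)
    (h : T.Run (b :: l) s' t) : T.Run (b :: a :: l) s t := by
  obtain ⟨sa, sb, hsa, hsb, -, -, hcomm⟩ := hI a b s hab hne (.of_step ha) hb
  obtain rfl : s' = sa := Option.some_inj.mp (ha.symm.trans hsa)
  cases h with
  | cons hstep hrest =>
    rw [hstep] at hcomm
    exact .cons hsb (.cons hcomm.symm hrest)

theorem IndepRel.run_move_front (hI : T.IndepRel I) {b : A} {l₂ : List A} :
    ∀ {l₁ : List A} {s t : S}, T.Run (l₁ ++ b :: l₂) s t → T.Enabled b s →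
      (∀ a ∈ l₁, I a b) → b ∉ l₁ → T.Run (b :: (l₁ ++ l₂)) s t
  | [], _, _, h, _, _, _ => h
  | a :: l₁, _, _, .cons ha hrest, hb, hind, hnotin => by
    have hab : I a b := hind a List.mem_cons_self
    have hne : a ≠ b := fun h => hnotin (h ▸ List.mem_cons_self)
    refine hI.run_cons_cons hab hne ha hb <|
      hI.run_move_front hrest (hI.enabled_of_step hab hne ha hb) ?_ ?_
    · exact fun x hx => hind x (List.mem_cons_of_mem a hx)
    · exact fun h => hnotin (List.mem_cons_of_mem a h)

end TS

theorem stmt4_general {S A : Type} (T : TS S A) (I : A → A → Prop) (hI : T.IndepRel I)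
    (Amp : Set A) (s0 sn : S)
    (hsub : ∀ a ∈ Amp, T.Enabled a s0)
    (l l1 l2 : List A) (ak : A)
    (hdecomp : l = l1 ++ ak :: l2)
    (hak : ak ∈ Amp)
    (hfirst : ∀ a ∈ l1, a ∉ Amp)
    (hind : ∀ a ∈ l1, I a ak)
    (hrun : T.Run l s0 sn) :
    ∃ tl : List A, (ak :: tl).length = l.length ∧ T.Run (ak :: tl) s0 sn := by
  subst hdecomp
  refine ⟨l1 ++ l2, by simp [Nat.add_assoc], ?_⟩
  exact hI.run_move_front hrun (hsub ak hak) hind (fun h => hfirst ak h hak)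

/-- let `π = s₀ →α₀ ... →α_{n-1} s_n` end in a deadlock state,
let `Amp ⊆ enabled(s₀)` satisfy C1, suppose `α_k` (decomposing the label list
as `l₁ ++ α_k :: l₂` with no member of `Amp` in `l₁`) is the first action of
`π` lying in `Amp`, and suppose each of `α₀, ..., α_{k-1}` is independent of
`α_k`. Then there is an execution fragment of the same length `n` from `s₀`
to `s_n` whose first action is `α_k`. -/
theorem stmt4 {S A : Type} (T : TS S A) (I : A → A → Prop) (hI : T.IndepRel I)
    (Amp : Set A) (s0 sn : S)
    (hsub : ∀ a ∈ Amp, T.Enabled a s0)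
    (hC1 : ∀ (m : List A) (g : A) (u : S), T.Run (m ++ [g]) s0 u →
      (∃ b ∈ Amp, ¬ I g b) → ∃ a ∈ m, a ∈ Amp)
    (l l1 l2 : List A) (ak : A)
    (hdecomp : l = l1 ++ ak :: l2)
    (hak : ak ∈ Amp)
    (hfirst : ∀ a ∈ l1, a ∉ Amp)
    (hind : ∀ a ∈ l1, I a ak)
    (hrun : T.Run l s0 sn)
    (hdead : T.Deadlock sn) :
    ∃ tl : List A, (ak :: tl).length = l.length ∧ T.Run (ak :: tl) s0 sn :=
  stmt4_general T I hI Amp s0 sn hsub l l1 l2 ak hdecomp hak hfirst hind hrun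
end
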